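/- arXiv:2202.09981 — 2 statements merged into one kernel-verified Lean document; each statement's English description precedes it below -/
import Mathlib

section
/- For all integers n ≥ 2 and m ≥ 1: if 0 ≤ r ≤ m−1, the minimum Hamming weight of a nonzero codeword of D_n(r,m) equals 2^{r+1}; and if 0 ≤ r ≤ m, the minimum Hamming weight of a nonzero codeword of C_n(r,m) equals n^{m−r}. -/
open Finset

/-- The `l`-th subvector in the concatenation decomposition:
`(subvec v l) i' = v (i'|l)`. -/
def subvec {n m : ℕ} (v : (Fin (m + 1) → Fin n) → ZMod 2) (l : Fin n) :
    (Fin m → Fin n) → ZMod 2 :=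
  fun i' => v (Fin.snoc i' l)

/-- The Berman code `D_n(r,m)`, defined recursively. -/
def BermanD (n : ℕ) : (m : ℕ) → ℕ → Set ((Fin m → Fin n) → ZMod 2)
  | 0, _ => {0}
  | m + 1, r =>
    if r = 0 then {v | ∑ i, v i = 0}
    else if m + 1 ≤ r then {0}
    else {v | (∀ l : Fin n, subvec v l ∈ BermanD n m (r - 1)) ∧
              (fun i' => ∑ l : Fin n, subvec v l i') ∈ BermanD n m r}

/-- The dual Berman code `C_n(r,m)`, defined recursively. -/
def BermanC (n : ℕ) : (m : ℕ) → ℕ → Set ((Fin m → Fin n) → ZMod 2)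
  | 0, _ => Set.univ
  | m + 1, r =>
    if r = 0 then {v | ∃ c : ZMod 2, ∀ i, v i = c}
    else if m + 1 ≤ r then Set.univ
    else {v | ∃ (u : (Fin m → Fin n) → ZMod 2) (w : Fin n → (Fin m → Fin n) → ZMod 2),
            u ∈ BermanC n m r ∧
            (∀ l : Fin n, (l : ℕ) < n - 1 → w l ∈ BermanC n m (r - 1)) ∧
            (∀ l : Fin n, (l : ℕ) = n - 1 → w l = 0) ∧
            (∀ l : Fin n, subvec v l = u + w l)}

/-- Hamming weight of a binary vector. -/
def hwt {n m : ℕ} (v : (Fin m → Fin n) → ZMod 2) : ℕ :=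
  (Finset.univ.filter fun i => v i ≠ 0).card

/-- `preceq j i` means `j ⪯ i`: for every position `k`, either `j k = 0` or `j k = i k`. -/
def preceq {n m : ℕ} (j i : Fin m → Fin n) : Prop :=
  ∀ k, (j k : ℕ) = 0 ∨ j k = i k

instance {n m : ℕ} (j i : Fin m → Fin n) : Decidable (preceq j i) :=
  inferInstanceAs (Decidable (∀ k, (j k : ℕ) = 0 ∨ j k = i k))

/-- Hamming weight of an index tuple. -/
def wtTuple {n m : ℕ} (i : Fin m → Fin n) : ℕ :=
  (Finset.univ.filter fun k => (i k : ℕ) ≠ 0).card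

/-- The vector `c_m(i')`: the indicator of `{i : i ⪯ i'}`. -/
def cVec {n : ℕ} (m : ℕ) (i' : Fin m → Fin n) : (Fin m → Fin n) → ZMod 2 :=
  fun i => if preceq i i' then 1 else 0

/-- The vector `d_m(i')`: the indicator of `{i : i' ⪯ i}`. -/
def dVec {n : ℕ} (m : ℕ) (i' : Fin m → Fin n) : (Fin m → Fin n) → ZMod 2 :=
  fun i => if preceq i' i then 1 else 0

/-- The matrix `A_m = A_1^{⊗m}`: its entry in row `i` and column `j` is `1` iff `j ⪯ i`. -/
def Amat (n m : ℕ) : Matrix (Fin m → Fin n) (Fin m → Fin n) (ZMod 2) :=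
  fun i j => if preceq j i then 1 else 0

/-! Both minimum distances are computed by induction on `m` through the block decomposition
`v = (v_0 | … | v_{n-1})`. For `v ∈ D_n(r,m)`: if `Σ v_l ≠ 0`, it is a nonzero word of
`D_n(r,m-1)` of weight at most `wt v`; otherwise at least two blocks are nonzero words of
`D_n(r-1,m-1)`. For `v ∈ C_n(r,m)` with blocks `u + u_l` (`u_{n-1} = 0`): if some block vanishes,
then `u` and hence every block lies in `C_n(r-1,m-1)`; otherwise all `n` blocks are nonzero words
of `C_n(r,m-1)`. The bounds are attained by `(x|x|0|…|0)` for a minimum-weight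
`x ∈ D_n(r-1,m-1)` and by `(u|u|…|u)` for a minimum-weight `u ∈ C_n(r,m-1)`. -/

theorem hammingNorm_add_le {ι : Type*} [Fintype ι] [DecidableEq ι] {β : ι → Type*}
    [∀ i, AddZeroClass (β i)] [∀ i, DecidableEq (β i)] (x y : ∀ i, β i) :
    hammingNorm (x + y) ≤ hammingNorm x + hammingNorm y := by
  refine (card_le_card fun i hi => ?_).trans (card_union_le _ _)
  simp only [mem_filter, mem_univ, true_and, mem_union, Pi.add_apply] at hi ⊢
  by_contra! h
  exact hi (by rw [h.1, h.2, add_zero])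

theorem Finset.exists_ne_ne_zero_of_sum_eq_zero {ι M : Type*} [AddCommMonoid M] {s : Finset ι}
    {f : ι → M} {i : ι} (hs : ∑ j ∈ s, f j = 0) (hi : i ∈ s) (hfi : f i ≠ 0) :
    ∃ j ∈ s, j ≠ i ∧ f j ≠ 0 := by
  by_contra! h
  exact hfi (by rwa [sum_eq_single_of_mem i hi fun j hj hji => h j hj hji] at hs)

theorem Fin.sum_ite_val_lt_two {M : Type*} [AddCommMonoid M] {n : ℕ} (hn : 2 ≤ n) (a : M) :
    ∑ l : Fin n, (if (l : ℕ) < 2 then a else 0) = a + a := by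
  obtain ⟨k, rfl⟩ := Nat.exists_eq_add_of_le hn
  rw [Fin.sum_univ_eq_sum_range (fun l => if l < 2 then a else 0), sum_range_add]
  have h : ∀ x, ¬ 2 + x < 2 := by omega
  simp [sum_range_succ, h]

section Weight

variable {n m : ℕ}

theorem hwt_pos_iff {v : (Fin m → Fin n) → ZMod 2} : 0 < hwt v ↔ v ≠ 0 :=
  hammingNorm_pos_iff

@[simp]
theorem hwt_zero : hwt (0 : (Fin m → Fin n) → ZMod 2) = 0 :=
  hammingNorm_zero

theorem hwt_single (i : Fin m → Fin n) : hwt (Pi.single i (1 : ZMod 2)) = 1 := by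
  simp [hwt, Pi.single_apply, filter_eq']

theorem hwt_add_le (u v : (Fin m → Fin n) → ZMod 2) : hwt (u + v) ≤ hwt u + hwt v :=
  hammingNorm_add_le u v

theorem hwt_sum_le {ι : Type*} (s : Finset ι) (f : ι → (Fin m → Fin n) → ZMod 2) :
    hwt (∑ l ∈ s, f l) ≤ ∑ l ∈ s, hwt (f l) :=
  le_sum_of_subadditive hwt hwt_zero.le hwt_add_le s f

theorem sum_eq_hwt (v : (Fin m → Fin n) → ZMod 2) : ∑ i, v i = (hwt v : ZMod 2) := by
  rw [hwt, natCast_card_filter]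
  refine sum_congr rfl fun i _ => ?_
  generalize v i = x
  revert x
  decide

end Weight

section Blocks

variable {n m : ℕ}

/-- `(f 0 | f 1 | … | f (n - 1))`, inverse to `subvec`. -/
def concatBlocks (f : Fin n → (Fin m → Fin n) → ZMod 2) : (Fin (m + 1) → Fin n) → ZMod 2 :=
  fun i => f (i (Fin.last m)) (Fin.init i)

@[simp]
theorem subvec_concatBlocks (f : Fin n → (Fin m → Fin n) → ZMod 2) (l : Fin n) :
    subvec (concatBlocks f) l = f l := by
  funext i
  simp [subvec, concatBlocks]

theorem concatBlocks_subvec (v : (Fin (m + 1) → Fin n) → ZMod 2) :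
    concatBlocks (subvec v) = v := by
  funext i
  simp [subvec, concatBlocks]

theorem subvec_add (u v : (Fin (m + 1) → Fin n) → ZMod 2) (l : Fin n) :
    subvec (u + v) l = subvec u l + subvec v l :=
  rfl

theorem hwt_concatBlocks (f : Fin n → (Fin m → Fin n) → ZMod 2) :
    hwt (concatBlocks f) = ∑ l, hwt (f l) := by
  simp only [hwt, card_filter]
  rw [← (Fin.snocEquiv fun _ => Fin n).sum_comp, Fintype.sum_prod_type]
  simp [concatBlocks, Fin.snocEquiv, Fin.init_snoc]

theorem hwt_eq_sum_hwt_subvec (v : (Fin (m + 1) → Fin n) → ZMod 2) :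
    hwt v = ∑ l, hwt (subvec v l) := by
  conv_lhs => rw [← concatBlocks_subvec v]
  exact hwt_concatBlocks _

theorem exists_subvec_ne_zero {v : (Fin (m + 1) → Fin n) → ZMod 2} (hv : v ≠ 0) :
    ∃ l, subvec v l ≠ 0 := by
  by_contra! h
  exact hv (by rw [← concatBlocks_subvec v, funext h]; rfl)

end Blocks

section BermanD

variable {n : ℕ}

theorem zero_mem_BermanD : ∀ {m r : ℕ}, (0 : (Fin m → Fin n) → ZMod 2) ∈ BermanD n m r
  | 0, _ => rfl
  | m + 1, r => by
    rw [BermanD]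
    split_ifs
    · simp
    · rfl
    · refine ⟨fun _ => zero_mem_BermanD, ?_⟩
      simp only [subvec, Pi.zero_apply, sum_const_zero]
      exact zero_mem_BermanD

theorem two_pow_le_hwt_of_mem_BermanD :
    ∀ {m r : ℕ} {v : (Fin m → Fin n) → ZMod 2}, v ∈ BermanD n m r → v ≠ 0 → 2 ^ (r + 1) ≤ hwt v
  | 0, _, _, hv, hv0 => absurd hv hv0
  | m + 1, r, v, hv, hv0 => by
    rw [BermanD] at hv
    split_ifs at hv with hr hmr
    · subst hr
      have heven : 2 ∣ hwt v := (ZMod.natCast_eq_zero_iff _ 2).mp (by rw [← sum_eq_hwt]; exact hv)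
      have hpos := hwt_pos_iff.mpr hv0
      omega
    · exact absurd hv hv0
    obtain ⟨hsub, hsum⟩ := hv
    rw [← sum_fn] at hsum
    have hr : r - 1 + 1 = r := by omega
    by_cases hs : ∑ l, subvec v l = 0
    · -- two distinct blocks are nonzero codewords of `D(r - 1, m)`
      obtain ⟨l₀, hl₀⟩ := exists_subvec_ne_zero hv0
      obtain ⟨l₁, -, hl₁l₀, hl₁⟩ := exists_ne_ne_zero_of_sum_eq_zero hs (mem_univ l₀) hl₀
      have h₀ := two_pow_le_hwt_of_mem_BermanD (hsub l₀) hl₀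
      have h₁ := two_pow_le_hwt_of_mem_BermanD (hsub l₁) hl₁
      rw [hr] at h₀ h₁
      calc 2 ^ (r + 1) = 2 ^ r + 2 ^ r := by ring
        _ ≤ hwt (subvec v l₁) + hwt (subvec v l₀) := add_le_add h₁ h₀
        _ ≤ ∑ l, hwt (subvec v l) :=
          add_le_sum (f := fun l => hwt (subvec v l)) (fun _ _ => Nat.zero_le _) (mem_univ _)
            (mem_univ _) hl₁l₀
        _ = hwt v := (hwt_eq_sum_hwt_subvec v).symm
    · calc 2 ^ (r + 1) ≤ hwt (∑ l, subvec v l) := two_pow_le_hwt_of_mem_BermanD hsum hs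
        _ ≤ ∑ l, hwt (subvec v l) := hwt_sum_le _ _
        _ = hwt v := (hwt_eq_sum_hwt_subvec v).symm

variable {m : ℕ}

def doubleBlock (x : (Fin m → Fin n) → ZMod 2) : (Fin (m + 1) → Fin n) → ZMod 2 :=
  concatBlocks fun l => if (l : ℕ) < 2 then x else 0

theorem hwt_doubleBlock (hn : 2 ≤ n) (x : (Fin m → Fin n) → ZMod 2) :
    hwt (doubleBlock x) = 2 * hwt x := by
  simp only [doubleBlock, hwt_concatBlocks, apply_ite hwt, hwt_zero, Fin.sum_ite_val_lt_two hn]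
  ring

theorem sum_subvec_doubleBlock (hn : 2 ≤ n) (x : (Fin m → Fin n) → ZMod 2) :
    ∑ l, subvec (doubleBlock x) l = 0 := by
  simp only [doubleBlock, subvec_concatBlocks, Fin.sum_ite_val_lt_two hn]
  exact ZModModule.add_self x

theorem doubleBlock_mem_BermanD_zero (hn : 2 ≤ n) (x : (Fin m → Fin n) → ZMod 2) :
    doubleBlock x ∈ BermanD n (m + 1) 0 := by
  rw [BermanD, if_pos rfl]
  show ∑ i, doubleBlock x i = 0
  rw [sum_eq_hwt, hwt_doubleBlock hn, Nat.cast_mul]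
  exact mul_eq_zero_of_left rfl _

theorem doubleBlock_mem_BermanD_succ (hn : 2 ≤ n) {r : ℕ} (hr : r < m)
    {x : (Fin m → Fin n) → ZMod 2} (hx : x ∈ BermanD n m r) :
    doubleBlock x ∈ BermanD n (m + 1) (r + 1) := by
  rw [BermanD, if_neg r.succ_ne_zero, if_neg (by omega)]
  refine ⟨fun l => ?_, ?_⟩
  · simp only [doubleBlock, subvec_concatBlocks]
    split_ifs
    exacts [hx, zero_mem_BermanD]
  · rw [← sum_fn, sum_subvec_doubleBlock hn]
    exact zero_mem_BermanD

theorem exists_mem_BermanD_hwt_eq (hn : 2 ≤ n) :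
    ∀ {r m : ℕ}, r < m → ∃ v ∈ BermanD n m r, hwt v = 2 ^ (r + 1)
  | 0, m + 1, _ =>
    ⟨doubleBlock (Pi.single (fun _ => ⟨0, by omega⟩) 1), doubleBlock_mem_BermanD_zero hn _,
      by simp [hwt_doubleBlock hn, hwt_single]⟩
  | r + 1, m + 1, hr => by
    obtain ⟨x, hx, hwx⟩ := exists_mem_BermanD_hwt_eq hn (Nat.lt_of_succ_lt_succ hr)
    exact ⟨doubleBlock x, doubleBlock_mem_BermanD_succ hn (by omega) hx,
      by rw [hwt_doubleBlock hn, hwx, pow_succ 2 (r + 1), mul_comm]⟩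

end BermanD

section BermanC

variable {n : ℕ}

theorem BermanC_eq_univ_of_le {m r : ℕ} (h : m ≤ r) : BermanC n m r = Set.univ := by
  cases m with
  | zero => rfl
  | succ m => rw [BermanC, if_neg (by omega), if_pos h]

theorem zero_mem_BermanC : ∀ {m r : ℕ}, (0 : (Fin m → Fin n) → ZMod 2) ∈ BermanC n m r
  | 0, _ => trivial
  | m + 1, r => by
    rw [BermanC]
    split_ifs
    · exact ⟨0, fun _ => rfl⟩
    · trivial
    · exact ⟨0, 0, zero_mem_BermanC, fun _ _ => zero_mem_BermanC, fun _ _ => rfl,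
        fun _ => (add_zero 0).symm⟩

theorem add_mem_BermanC : ∀ {m r : ℕ} {u v : (Fin m → Fin n) → ZMod 2},
    u ∈ BermanC n m r → v ∈ BermanC n m r → u + v ∈ BermanC n m r
  | 0, _, _, _, _, _ => trivial
  | m + 1, r, u, v, hu, hv => by
    rw [BermanC] at hu hv ⊢
    split_ifs at hu hv ⊢
    · obtain ⟨a, ha⟩ := hu
      obtain ⟨b, hb⟩ := hv
      exact ⟨a + b, fun i => by rw [Pi.add_apply, ha, hb]⟩
    · trivial
    · obtain ⟨u₁, w₁, hu₁, hw₁, hw₁', hs₁⟩ := hu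
      obtain ⟨u₂, w₂, hu₂, hw₂, hw₂', hs₂⟩ := hv
      refine ⟨u₁ + u₂, w₁ + w₂, add_mem_BermanC hu₁ hu₂,
        fun l hl => add_mem_BermanC (hw₁ l hl) (hw₂ l hl),
        fun l hl => by rw [Pi.add_apply, hw₁' l hl, hw₂' l hl, add_zero], fun l => ?_⟩
      rw [subvec_add, hs₁, hs₂, Pi.add_apply]
      abel

variable {m : ℕ}

def repBlock (u : (Fin m → Fin n) → ZMod 2) : (Fin (m + 1) → Fin n) → ZMod 2 :=
  concatBlocks fun _ => u

theorem hwt_repBlock (u : (Fin m → Fin n) → ZMod 2) : hwt (repBlock u) = n * hwt u := by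
  simp [repBlock, hwt_concatBlocks]

theorem repBlock_mem_BermanC {r : ℕ} {u : (Fin m → Fin n) → ZMod 2} (hu : u ∈ BermanC n m r) :
    repBlock u ∈ BermanC n (m + 1) r := by
  rw [BermanC]
  split_ifs with hr hmr
  · subst hr
    cases m with
    | zero => exact ⟨u Fin.elim0, fun i => congrArg u (Subsingleton.elim _ _)⟩
    | succ m =>
      rw [BermanC, if_pos rfl] at hu
      obtain ⟨c, hc⟩ := hu
      exact ⟨c, fun i => hc _⟩
  · trivial
  · exact ⟨u, 0, hu, fun _ _ => zero_mem_BermanC, fun _ _ => rfl,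
      fun l => by rw [repBlock, subvec_concatBlocks, Pi.zero_apply, add_zero]⟩

theorem const_mem_BermanC (c : ZMod 2) :
    ∀ {m r : ℕ}, (fun _ => c : (Fin m → Fin n) → ZMod 2) ∈ BermanC n m r
  | 0, _ => trivial
  | _ + 1, _ => repBlock_mem_BermanC (const_mem_BermanC c)

theorem BermanC_mono : ∀ {m r r' : ℕ}, r ≤ r' → BermanC n m r ⊆ BermanC n m r'
  | 0, _, _, _ => fun _ _ => trivial
  | m + 1, r, r', h => fun v hv => by
    rcases Nat.eq_zero_or_pos r with rfl | hr
    · rw [BermanC, if_pos rfl] at hv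
      obtain ⟨c, hc⟩ := hv
      rw [show v = fun _ => c from funext hc]
      exact const_mem_BermanC c
    by_cases hmr' : m + 1 ≤ r'
    · rw [BermanC_eq_univ_of_le hmr']
      trivial
    rw [BermanC, if_neg (by omega), if_neg (by omega)] at hv
    rw [BermanC, if_neg (by omega), if_neg hmr']
    obtain ⟨u, w, hu, hw, hw', hs⟩ := hv
    exact ⟨u, w, BermanC_mono h hu, fun l hl => BermanC_mono (by omega) (hw l hl), hw', hs⟩

theorem pow_le_hwt_of_mem_BermanC :
    ∀ {m r : ℕ} {v : (Fin m → Fin n) → ZMod 2}, v ∈ BermanC n m r → v ≠ 0 → n ^ (m - r) ≤ hwt v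
  | 0, _, _, _, hv0 => by
    rw [Nat.zero_sub, pow_zero]
    exact hwt_pos_iff.mpr hv0
  | m + 1, r, v, hv, hv0 => by
    rw [BermanC] at hv
    split_ifs at hv with hr hmr
    · obtain ⟨c, hc⟩ := hv
      have hc0 : c ≠ 0 := fun h => hv0 (funext fun i => (hc i).trans h)
      simp [hwt, hc, hc0, hr]
    · rw [Nat.sub_eq_zero_of_le hmr, pow_zero]
      exact hwt_pos_iff.mpr hv0
    obtain ⟨u, w, hu, hw, hw_last, hsub⟩ := hv
    have hw' : ∀ l, w l ∈ BermanC n m (r - 1) := fun l => by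
      rcases lt_or_ge (l : ℕ) (n - 1) with hl | hl
      · exact hw l hl
      · rw [hw_last l (by omega)]
        exact zero_mem_BermanC
    rw [hwt_eq_sum_hwt_subvec]
    by_cases hz : ∃ l₀, subvec v l₀ = 0
    · -- then `u = w l₀`, so every block `u + w l` lies in `C(r - 1, m)`
      obtain ⟨l₀, hl₀⟩ := hz
      have hu' : u = w l₀ := by
        rw [hsub, ← ZModModule.sub_eq_add, sub_eq_zero] at hl₀
        exact hl₀
      obtain ⟨l₁, hl₁⟩ := exists_subvec_ne_zero hv0
      have h₁ := pow_le_hwt_of_mem_BermanC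
        (by rw [hsub, hu']; exact add_mem_BermanC (hw' l₀) (hw' l₁)) hl₁
      rw [show m - (r - 1) = m + 1 - r by omega] at h₁
      exact h₁.trans
        (single_le_sum (f := fun l => hwt (subvec v l)) (fun _ _ => Nat.zero_le _) (mem_univ l₁))
    · push Not at hz
      have hblock : ∀ l, n ^ (m - r) ≤ hwt (subvec v l) := fun l =>
        pow_le_hwt_of_mem_BermanC
          (by rw [hsub]; exact add_mem_BermanC hu (BermanC_mono (Nat.sub_le r 1) (hw' l))) (hz l)
      calc n ^ (m + 1 - r) = (univ : Finset (Fin n)).card • n ^ (m - r) := by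
            rw [card_univ, Fintype.card_fin, smul_eq_mul, ← pow_succ', Nat.sub_add_comm (by omega)]
        _ ≤ ∑ l, hwt (subvec v l) := card_nsmul_le_sum _ _ _ fun l _ => hblock l

theorem exists_mem_BermanC_hwt_eq (hn : 0 < n) {m r : ℕ} (hrm : r ≤ m) :
    ∃ v ∈ BermanC n m r, hwt v = n ^ (m - r) := by
  induction m, hrm using Nat.le_induction with
  | base =>
    exact ⟨Pi.single (fun _ => ⟨0, hn⟩) 1, by simp [BermanC_eq_univ_of_le], by simp [hwt_single]⟩
  | succ m hrm ih =>
    obtain ⟨u, hu, hwu⟩ := ih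
    exact ⟨repBlock u, repBlock_mem_BermanC hu,
      by rw [hwt_repBlock, hwu, Nat.sub_add_comm hrm, pow_succ']⟩

end BermanC

/-- minimum distances of the Berman and dual Berman codes. -/
theorem berman_minDist (n m r : ℕ) (hn : 2 ≤ n) (hm : 1 ≤ m) :
    (r ≤ m - 1 →
      IsLeast {k : ℕ | ∃ v ∈ BermanD n m r, v ≠ 0 ∧ hwt v = k} (2 ^ (r + 1))) ∧
    (r ≤ m →
      IsLeast {k : ℕ | ∃ v ∈ BermanC n m r, v ≠ 0 ∧ hwt v = k} (n ^ (m - r))) := by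
  refine ⟨fun hr => ⟨?_, ?_⟩, fun hr => ⟨?_, ?_⟩⟩
  · obtain ⟨v, hv, hwv⟩ := exists_mem_BermanD_hwt_eq hn (show r < m by omega)
    exact ⟨v, hv, hwt_pos_iff.mp (by rw [hwv]; positivity), hwv⟩
  · rintro _ ⟨v, hv, hv0, rfl⟩
    exact two_pow_le_hwt_of_mem_BermanD hv hv0
  · obtain ⟨v, hv, hwv⟩ := exists_mem_BermanC_hwt_eq (show 0 < n by omega) hr
    exact ⟨v, hv, hwt_pos_iff.mp (by rw [hwv]; exact pow_pos (by omega) _), hwv⟩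
  · rintro _ ⟨v, hv, hv0, rfl⟩
    exact pow_le_hwt_of_mem_BermanC hv hv0
end

section
/- Let n ≥ 2, m ≥ 2, 0 ≤ r ≤ m, and t ∈ {0,…,m−2}. The permutation β_t of {0,…,n−1}^m defined by β_t(i_0,…,i_{m−1}) = (i_0,…,i_{t−1},i_{m−1},i_{t+1},…,i_{m−2},i_t) (swapping positions t and m−1 of the index tuple) is an automorphism of both D_n(r,m) and C_n(r,m). -/
open Finset

/-! Both codes are cut out by syndromes with respect to the zeta matrix `A = Amat n m` of
the coordinatewise order `⪯`, which over `𝔽₂` is an involution (Möbius inversion: an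
interval `[k, i]` with `k ⪯ i` has `2 ^ #{s | k s ≠ i s}` elements): `v ∈ D_n(r,m)` iff
`(v A) i = 0` whenever `wt i ≤ r`, and `v ∈ C_n(r,m)` iff `(A v) i = 0` whenever `wt i > r`.
Both characterizations follow by induction on `m` from the recursive definitions, splitting
an index as `(i'|a)`. A permutation of the positions of the index tuples preserves `⪯` and
the weight, so it is an automorphism of both codes; `β_t` is such a permutation. -/

open Matrix

section

variable {n m : ℕ}

lemma sum_coord_between (a b : Fin n) :
    (∑ c : Fin n, if ((a : ℕ) = 0 ∨ c = a) ∧ ((c : ℕ) = 0 ∨ c = b) then (1 : ZMod 2) else 0) =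
      if a = b then 1 else 0 := by
  by_cases ha : (a : ℕ) = 0
  · have hc : ∀ c : Fin n, (c : ℕ) = 0 ↔ c = a := fun c => by rw [Fin.ext_iff, ha]
    simp only [ha, true_or, true_and, hc]
    by_cases hab : a = b
    · simp [hab]
    · rw [if_neg hab, Finset.sum_boole, Finset.filter_or, Finset.filter_eq', Finset.filter_eq',
        if_pos (Finset.mem_univ _), if_pos (Finset.mem_univ _), ← Finset.insert_eq,
        Finset.card_pair hab]
      rfl
  · simp only [ha, false_or, ite_and, Finset.sum_ite_eq', Finset.mem_univ, if_true]

theorem amat_mul_self : Amat n m * Amat n m = 1 := by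
  ext i k
  have hprod : ∀ j : Fin m → Fin n, Amat n m i j * Amat n m j k =
      ∏ s, if ((k s : ℕ) = 0 ∨ j s = k s) ∧ ((j s : ℕ) = 0 ∨ j s = i s) then 1 else 0 := by
    intro j
    simp only [Amat]
    rw [ite_zero_mul_ite_zero, mul_one]
    simp only [preceq, Fintype.prod_boole, forall_and, and_comm, eq_comm]
  -- the sum over the interval `k ⪯ j ⪯ i` factors over the coordinates
  rw [mul_apply, Finset.sum_congr rfl fun j _ => hprod j,
    ← Fintype.prod_sum fun s c =>
      if ((k s : ℕ) = 0 ∨ c = k s) ∧ ((c : ℕ) = 0 ∨ c = i s) then (1 : ZMod 2) else 0]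
  simp only [sum_coord_between, Fintype.prod_boole, one_apply, ← funext_iff, eq_comm]

lemma mulVec_amat_apply (v : (Fin m → Fin n) → ZMod 2) (i : Fin m → Fin n) :
    (Amat n m *ᵥ v) i = ∑ j, if preceq j i then v j else 0 := by
  simp only [mulVec, dotProduct, Amat, ite_mul, one_mul, zero_mul]

lemma vecMul_amat_apply (v : (Fin m → Fin n) → ZMod 2) (i : Fin m → Fin n) :
    (v ᵥ* Amat n m) i = ∑ j, if preceq i j then v j else 0 := by
  simp only [vecMul, dotProduct, Amat, mul_ite, mul_one, mul_zero]

lemma vecMul_amat_eq_zero_iff (v : (Fin m → Fin n) → ZMod 2) : v ᵥ* Amat n m = 0 ↔ v = 0 := by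
  refine ⟨fun h => ?_, by rintro rfl; exact zero_vecMul _⟩
  rw [← vecMul_one v, ← amat_mul_self, ← vecMul_vecMul, h, zero_vecMul]

lemma mulVec_amat_single_zero [NeZero n] (c : ZMod 2) :
    Amat n m *ᵥ Pi.single 0 c = fun _ => c := by
  funext i
  rw [mulVec_amat_apply, Fintype.sum_eq_single 0 fun j hj => by simp [hj],
    if_pos (show preceq 0 i from fun _ => Or.inl rfl), Pi.single_eq_same]

lemma wtTuple_le (i : Fin m → Fin n) : wtTuple i ≤ m :=
  (Finset.card_filter_le _ _).trans_eq (Finset.card_fin m)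

lemma wtTuple_eq_zero_iff [NeZero n] {i : Fin m → Fin n} : wtTuple i = 0 ↔ i = 0 := by
  simp [wtTuple, Finset.filter_eq_empty_iff, funext_iff]

lemma wtTuple_snoc [NeZero n] (i : Fin m → Fin n) (a : Fin n) :
    wtTuple (Fin.snoc i a : Fin (m + 1) → Fin n) = wtTuple i + if a = 0 then 0 else 1 := by
  simp only [wtTuple, Finset.card_filter, Fin.sum_univ_castSucc, Fin.snoc_castSucc,
    Fin.snoc_last, Fin.val_ne_zero_iff, ite_not]

lemma wtTuple_comp_perm (σ : Equiv.Perm (Fin m)) (i : Fin m → Fin n) :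
    wtTuple (i ∘ σ) = wtTuple i := by
  simp only [wtTuple, Finset.card_filter]
  exact Equiv.sum_comp σ fun k => if (i k : ℕ) ≠ 0 then 1 else 0

lemma preceq_snoc_iff (i j : Fin m → Fin n) (a b : Fin n) :
    preceq (Fin.snoc i a : Fin (m + 1) → Fin n) (Fin.snoc j b) ↔
      preceq i j ∧ ((a : ℕ) = 0 ∨ a = b) := by
  simp only [preceq, Fin.forall_fin_succ', Fin.snoc_castSucc, Fin.snoc_last]

lemma preceq_comp_perm (σ : Equiv.Perm (Fin m)) (i j : Fin m → Fin n) :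
    preceq (i ∘ σ) (j ∘ σ) ↔ preceq i j :=
  ⟨fun h k => by simpa using h (σ.symm k), fun h k => h (σ k)⟩

lemma sum_snoc {M : Type*} [AddCommMonoid M] (g : (Fin (m + 1) → Fin n) → M) :
    ∑ j, g j = ∑ b : Fin n, ∑ j : Fin m → Fin n, g (Fin.snoc j b) := by
  rw [← Equiv.sum_comp (Fin.snocEquiv fun _ => Fin n) g, Fintype.sum_prod_type]
  rfl

lemma vecMul_amat_snoc (v : (Fin (m + 1) → Fin n) → ZMod 2) (i : Fin m → Fin n) (a : Fin n) :
    (v ᵥ* Amat n (m + 1)) (Fin.snoc i a) =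
      ∑ b, if (a : ℕ) = 0 ∨ a = b then (subvec v b ᵥ* Amat n m) i else 0 := by
  rw [vecMul_amat_apply, sum_snoc]
  refine Finset.sum_congr rfl fun b _ => ?_
  by_cases h : (a : ℕ) = 0 ∨ a = b <;> simp [vecMul_amat_apply, preceq_snoc_iff, h, subvec]

lemma mulVec_amat_snoc (v : (Fin (m + 1) → Fin n) → ZMod 2) (i : Fin m → Fin n) (a : Fin n) :
    (Amat n (m + 1) *ᵥ v) (Fin.snoc i a) =
      ∑ b : Fin n, if (b : ℕ) = 0 ∨ b = a then (Amat n m *ᵥ subvec v b) i else 0 := by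
  rw [mulVec_amat_apply, sum_snoc]
  refine Finset.sum_congr rfl fun b _ => ?_
  by_cases h : (b : ℕ) = 0 ∨ b = a <;> simp [mulVec_amat_apply, preceq_snoc_iff, h, subvec]

section NeZero

variable [NeZero n] (v : (Fin (m + 1) → Fin n) → ZMod 2) (i : Fin m → Fin n)

lemma vecMul_amat_snoc_zero :
    (v ᵥ* Amat n (m + 1)) (Fin.snoc i 0) = ∑ b, (subvec v b ᵥ* Amat n m) i := by
  simp [vecMul_amat_snoc]

lemma vecMul_amat_snoc_of_ne_zero {a : Fin n} (ha : a ≠ 0) :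
    (v ᵥ* Amat n (m + 1)) (Fin.snoc i a) = (subvec v a ᵥ* Amat n m) i := by
  simp [vecMul_amat_snoc, Fin.val_eq_zero_iff, ha]

lemma mulVec_amat_snoc_zero :
    (Amat n (m + 1) *ᵥ v) (Fin.snoc i 0) = (Amat n m *ᵥ subvec v 0) i := by
  simp [mulVec_amat_snoc]

lemma mulVec_amat_snoc_of_ne_zero {a : Fin n} (ha : a ≠ 0) :
    (Amat n (m + 1) *ᵥ v) (Fin.snoc i a) =
      (Amat n m *ᵥ subvec v 0) i + (Amat n m *ᵥ subvec v a) i := by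
  rw [mulVec_amat_snoc,
    Fintype.sum_eq_add 0 a ha.symm fun b hb => by simp [Fin.val_eq_zero_iff, hb]]
  simp

end NeZero

lemma vecMul_amat_comp_perm (σ : Equiv.Perm (Fin m)) (v : (Fin m → Fin n) → ZMod 2)
    (i : Fin m → Fin n) :
    ((fun j => v (j ∘ σ)) ᵥ* Amat n m) i = (v ᵥ* Amat n m) (i ∘ σ) := by
  rw [vecMul_amat_apply, vecMul_amat_apply]
  exact Fintype.sum_equiv (σ.symm.arrowCongr (Equiv.refl _)) _ _ fun j => by
    show _ = if preceq (i ∘ σ) (j ∘ σ) then v (j ∘ σ) else 0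
    simp only [preceq_comp_perm]

lemma mulVec_amat_comp_perm (σ : Equiv.Perm (Fin m)) (v : (Fin m → Fin n) → ZMod 2)
    (i : Fin m → Fin n) :
    (Amat n m *ᵥ fun j => v (j ∘ σ)) i = (Amat n m *ᵥ v) (i ∘ σ) := by
  rw [mulVec_amat_apply, mulVec_amat_apply]
  exact Fintype.sum_equiv (σ.symm.arrowCongr (Equiv.refl _)) _ _ fun j => by
    show _ = if preceq (j ∘ σ) (i ∘ σ) then v (j ∘ σ) else 0
    simp only [preceq_comp_perm]

lemma forall_vecMul_amat_eq_zero_iff {r : ℕ} (hr : m ≤ r) (v : (Fin m → Fin n) → ZMod 2) :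
    (∀ i, wtTuple i ≤ r → (v ᵥ* Amat n m) i = 0) ↔ v = 0 := by
  rw [← vecMul_amat_eq_zero_iff, funext_iff]
  exact forall_congr' fun i => ⟨fun h => h ((wtTuple_le i).trans hr), fun h _ => h⟩

lemma forall_vecMul_amat_snoc_eq_zero_iff [NeZero n] (v : (Fin (m + 1) → Fin n) → ZMod 2)
    (r : ℕ) :
    (∀ i, wtTuple i ≤ r + 1 → (v ᵥ* Amat n (m + 1)) i = 0) ↔
      (∀ l i, wtTuple i ≤ r → (subvec v l ᵥ* Amat n m) i = 0) ∧
        ∀ i, wtTuple i ≤ r + 1 → ((fun i' => ∑ l, subvec v l i') ᵥ* Amat n m) i = 0 := by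
  have hsum : ∀ i, ((fun i' => ∑ l, subvec v l i') ᵥ* Amat n m) i =
      (v ᵥ* Amat n (m + 1)) (Fin.snoc i 0) := fun i => by
    rw [vecMul_amat_snoc_zero, ← Finset.sum_fn, sum_vecMul, Finset.sum_apply]
  constructor
  · intro h
    have hzero : ∀ i, wtTuple i ≤ r + 1 → (v ᵥ* Amat n (m + 1)) (Fin.snoc i 0) = 0 :=
      fun i hi => h _ (by rw [wtTuple_snoc, if_pos rfl]; omega)
    have hne : ∀ l ≠ 0, ∀ i, wtTuple i ≤ r → (subvec v l ᵥ* Amat n m) i = 0 :=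
      fun l hl i hi => by
        rw [← vecMul_amat_snoc_of_ne_zero v i hl]
        exact h _ (by rw [wtTuple_snoc, if_neg hl]; omega)
    refine ⟨fun l i hi => ?_, fun i hi => (hsum i).trans (hzero i hi)⟩
    by_cases hl : l = 0
    · subst hl
      rw [← Fintype.sum_eq_single 0 fun l hl => hne l hl i hi, ← vecMul_amat_snoc_zero]
      exact hzero i (by omega)
    · exact hne l hl i hi
  · rintro ⟨hsub, hsum'⟩ i hi
    induction i using Fin.snocCases with | snoc i a => ?_
    rw [wtTuple_snoc] at hi
    by_cases ha : a = 0
    · subst ha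
      rw [← hsum]
      exact hsum' i (by simpa using hi)
    · rw [vecMul_amat_snoc_of_ne_zero v i ha]
      exact hsub a i (by rw [if_neg ha] at hi; omega)

theorem mem_bermanD_iff [NeZero n] {r : ℕ} (v : (Fin m → Fin n) → ZMod 2) :
    v ∈ BermanD n m r ↔ ∀ i, wtTuple i ≤ r → (v ᵥ* Amat n m) i = 0 := by
  induction m generalizing r with
  | zero =>
    rw [forall_vecMul_amat_eq_zero_iff (Nat.zero_le r)]
    rfl
  | succ m ih =>
    rcases r with _ | r
    · simp only [BermanD, if_true, Set.mem_ofPred_eq, Nat.le_zero, wtTuple_eq_zero_iff,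
        forall_eq, vecMul_amat_apply]
      simp [preceq]
    · by_cases hrm : m + 1 ≤ r + 1
      · rw [forall_vecMul_amat_eq_zero_iff hrm]
        simp [BermanD, hrm]
      · simp only [BermanD, Nat.add_one_ne_zero, hrm, if_false, Set.mem_ofPred_eq,
          Nat.add_sub_cancel, ih]
        exact (forall_vecMul_amat_snoc_eq_zero_iff v r).symm

lemma forall_pos_wtTuple_mulVec_amat_eq_zero_iff [NeZero n] (v : (Fin m → Fin n) → ZMod 2) :
    (∀ i, 0 < wtTuple i → (Amat n m *ᵥ v) i = 0) ↔ ∃ c, ∀ i, v i = c := by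
  have hpos : ∀ i : Fin m → Fin n, 0 < wtTuple i ↔ i ≠ 0 := fun i => by
    rw [Nat.pos_iff_ne_zero, Ne, wtTuple_eq_zero_iff]
  simp only [hpos]
  constructor
  · intro h
    set c := (Amat n m *ᵥ v) 0 with hc
    have hsingle : Amat n m *ᵥ v = Pi.single 0 c := funext fun j => by
      by_cases hj : j = 0
      · subst hj; simp [hc]
      · simp [hj, h j hj]
    refine ⟨c, fun i => ?_⟩
    rw [← one_mulVec v, ← amat_mul_self, ← mulVec_mulVec, hsingle, mulVec_amat_single_zero]
  · rintro ⟨c, hc⟩ i hi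
    obtain rfl : v = Amat n m *ᵥ Pi.single 0 c := by
      rw [mulVec_amat_single_zero]
      exact funext hc
    rw [mulVec_mulVec, amat_mul_self, one_mulVec, Pi.single_eq_of_ne hi]

lemma mulVec_amat_subvec_eq_of_forall [NeZero n] {v : (Fin (m + 1) → Fin n) → ZMod 2} {r : ℕ}
    (h : ∀ i, r + 1 < wtTuple i → (Amat n (m + 1) *ᵥ v) i = 0) (a : Fin n)
    {i : Fin m → Fin n} (hi : r < wtTuple i) :
    (Amat n m *ᵥ subvec v a) i = (Amat n m *ᵥ subvec v 0) i := by
  by_cases ha : a = 0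
  · rw [ha]
  · have := h _ (show r + 1 < wtTuple (Fin.snoc i a : Fin (m + 1) → Fin n) by
      rw [wtTuple_snoc, if_neg ha]; omega)
    rw [mulVec_amat_snoc_of_ne_zero v i ha, CharTwo.add_eq_zero] at this
    exact this.symm

lemma forall_mulVec_amat_snoc_eq_zero_iff (hn : 2 ≤ n) (v : (Fin (m + 1) → Fin n) → ZMod 2)
    (r : ℕ) :
    (∀ i, r + 1 < wtTuple i → (Amat n (m + 1) *ᵥ v) i = 0) ↔
      ∃ (u : (Fin m → Fin n) → ZMod 2) (w : Fin n → (Fin m → Fin n) → ZMod 2),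
        (∀ i, r + 1 < wtTuple i → (Amat n m *ᵥ u) i = 0) ∧
        (∀ l : Fin n, (l : ℕ) < n - 1 → ∀ i, r < wtTuple i → (Amat n m *ᵥ w l) i = 0) ∧
        (∀ l : Fin n, (l : ℕ) = n - 1 → w l = 0) ∧
        (∀ l : Fin n, subvec v l = u + w l) := by
  have : NeZero n := ⟨by omega⟩
  constructor
  · intro h
    set L : Fin n := ⟨n - 1, by omega⟩
    have hzero : ∀ i, r + 1 < wtTuple i → (Amat n m *ᵥ subvec v 0) i = 0 := fun i hi => by
      rw [← mulVec_amat_snoc_zero]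
      exact h _ (by rw [wtTuple_snoc, if_pos rfl]; omega)
    have heq := mulVec_amat_subvec_eq_of_forall h
    refine ⟨subvec v L, fun l => subvec v l + subvec v L, fun i hi => ?_, fun l _ i hi => ?_,
      fun l hl => ?_, fun l => ?_⟩
    · rw [heq L (by omega : r < wtTuple i)]
      exact hzero i hi
    · rw [mulVec_add, Pi.add_apply, heq l hi, heq L hi, CharTwo.add_self_eq_zero]
    · obtain rfl : l = L := Fin.ext hl
      funext x
      exact CharTwo.add_self_eq_zero _
    · funext x
      show subvec v l x = subvec v L x + (subvec v l x + subvec v L x)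
      rw [add_left_comm, CharTwo.add_self_eq_zero, add_zero]
  · rintro ⟨u, w, hu, hw, hwL, hv⟩ i hi
    have hw' : ∀ l i, r < wtTuple i → (Amat n m *ᵥ w l) i = 0 := by
      intro l i hi
      by_cases hl : (l : ℕ) < n - 1
      · exact hw l hl i hi
      · rw [hwL l (by omega), mulVec_zero]
        rfl
    have hsub : ∀ l i, (Amat n m *ᵥ subvec v l) i = (Amat n m *ᵥ u) i + (Amat n m *ᵥ w l) i :=
      fun l i => by rw [hv l, mulVec_add, Pi.add_apply]
    induction i using Fin.snocCases with | snoc i a => ?_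
    rw [wtTuple_snoc] at hi
    by_cases ha : a = 0
    · subst ha
      rw [if_pos rfl, add_zero] at hi
      rw [mulVec_amat_snoc_zero, hsub, hu i hi, hw' 0 i (by omega), add_zero]
    · rw [if_neg ha] at hi
      rw [mulVec_amat_snoc_of_ne_zero v i ha, hsub, hsub, hw' 0 i (by omega),
        hw' a i (by omega), add_zero, CharTwo.add_self_eq_zero]

theorem mem_bermanC_iff (hn : 2 ≤ n) {r : ℕ} (v : (Fin m → Fin n) → ZMod 2) :
    v ∈ BermanC n m r ↔ ∀ i, r < wtTuple i → (Amat n m *ᵥ v) i = 0 := by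
  have : NeZero n := ⟨by omega⟩
  induction m generalizing r with
  | zero =>
    simp only [BermanC, Set.mem_univ, true_iff]
    exact fun i hi => absurd hi (not_lt.2 ((wtTuple_le i).trans (Nat.zero_le r)))
  | succ m ih =>
    rcases r with _ | r
    · simp only [BermanC, if_true, Set.mem_ofPred_eq]
      exact (forall_pos_wtTuple_mulVec_amat_eq_zero_iff v).symm
    · by_cases hrm : m + 1 ≤ r + 1
      · simp only [BermanC, Nat.add_one_ne_zero, hrm, if_true, if_false, Set.mem_univ, true_iff]
        exact fun i hi => absurd hi (not_lt.2 ((wtTuple_le i).trans hrm))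
      · simp only [BermanC, Nat.add_one_ne_zero, hrm, if_false, Set.mem_ofPred_eq,
          Nat.add_sub_cancel, ih]
        exact (forall_mulVec_amat_snoc_eq_zero_iff hn v r).symm

theorem comp_perm_mem_bermanD [NeZero n] (σ : Equiv.Perm (Fin m)) {r : ℕ}
    {v : (Fin m → Fin n) → ZMod 2} (hv : v ∈ BermanD n m r) :
    (fun i => v (i ∘ σ)) ∈ BermanD n m r := by
  rw [mem_bermanD_iff] at hv ⊢
  intro i hi
  rw [vecMul_amat_comp_perm]
  exact hv _ (by rwa [wtTuple_comp_perm])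

theorem comp_perm_mem_bermanC (hn : 2 ≤ n) (σ : Equiv.Perm (Fin m)) {r : ℕ}
    {v : (Fin m → Fin n) → ZMod 2} (hv : v ∈ BermanC n m r) :
    (fun i => v (i ∘ σ)) ∈ BermanC n m r := by
  rw [mem_bermanC_iff hn] at hv ⊢
  intro i hi
  rw [mulVec_amat_comp_perm]
  exact hv _ (by rwa [wtTuple_comp_perm])

end

/-- swapping positions `t` and `m−1` of the index tuple is an automorphism
of both `D_n(r,m)` and `C_n(r,m)`. -/
theorem berman_auto_swap (n m r t : ℕ) (hn : 2 ≤ n) (hm : 2 ≤ m)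
    (ht : t ≤ m - 2) :
    (∀ v ∈ BermanD n m r,
      (fun i : Fin m → Fin n =>
          v (i ∘ Equiv.swap (⟨t, by omega⟩ : Fin m) ⟨m - 1, by omega⟩)) ∈ BermanD n m r) ∧
    (∀ v ∈ BermanC n m r,
      (fun i : Fin m → Fin n =>
          v (i ∘ Equiv.swap (⟨t, by omega⟩ : Fin m) ⟨m - 1, by omega⟩)) ∈ BermanC n m r) := by
  have : NeZero n := ⟨by omega⟩
  exact ⟨fun v => comp_perm_mem_bermanD _, fun v => comp_perm_mem_bermanC hn _⟩
end
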